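/- For all n ≥ 0, c_n = Σ_{i ≥ 2} (i-1)·|B(n-2i)| + Σ_{i ≥ 4} ⌈(i-4)/4⌉·|B(n-i)|, where the first sum is over integers i with 2 ≤ 2i ≤ n and the second over integers i with 4 ≤ i ≤ n. -/

import Mathlib

/-- `pre2 s` is the multiset of all pairwise products of two distinct entries
(by position) of the multiset `s`, i.e. the summands of `e₂` evaluated at `s`. -/
def pre2 (s : Multiset ℕ) : Multiset ℕ := (Multiset.powersetCard 2 s).map Multiset.prod

open Classical in
/-- The finset of binary partitions of `n`: partitions all of whose parts are powers of 2. -/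
noncomputable def binaryPartitions (n : ℕ) : Finset (Nat.Partition n) :=
  Finset.univ.filter fun l => ∀ p ∈ l.parts, ∃ i : ℕ, p = 2 ^ i

/-- `c n = m₄(ImB₂(n))`: the total number of parts equal to 4 in the image of `pre2`
on binary partitions of `n` with at least two parts; by injectivity this equals
`∑_{λ ∈ B(n)} (m₁(λ)·m₄(λ) + C(m₂(λ), 2))`. -/
noncomputable def c (n : ℕ) : ℕ :=
  ∑ l ∈ binaryPartitions n,
    ((l.parts.count 1) * (l.parts.count 4) + Nat.choose (l.parts.count 2) 2)

/-!
Both summands of `c n` count sub-multisets of `λ`: `C(m₂, 2) = ∑_{2 ≤ j ≤ m₂} (j - 1)` runs over the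
`j` such that `λ` has at least `j` parts equal to 2, and `m₁ m₄` is the number of pairs `a, b ≥ 1`
such that `λ` has at least `a` ones and `b` fours. Deleting a fixed binary multiset of sum `s` is a
bijection from the binary partitions of `n` containing it onto `B(n - s)`, so after exchanging the
order of summation every count becomes a weighted sum of `|B(n - s)|`. The pairs with `a + 4b = i`
are given by the `b ≥ 1` with `4b < i`, of which there are `⌊(i - 1)/4⌋ = ⌈(i - 4)/4⌉`.
-/

open Finset

@[simp]
lemma mem_binaryPartitions {n : ℕ} {l : n.Partition} :
    l ∈ binaryPartitions n ↔ ∀ p ∈ l.parts, ∃ i : ℕ, p = 2 ^ i := by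
  simp [binaryPartitions]

lemma Multiset.replicate_add_replicate_le_iff {α : Type*} [DecidableEq α] {x y : α} (hxy : x ≠ y)
    {a b : ℕ} {s : Multiset α} :
    replicate a x + replicate b y ≤ s ↔ a ≤ s.count x ∧ b ≤ s.count y := by
  simp only [Multiset.le_iff_count, Multiset.count_add, Multiset.count_replicate]
  refine ⟨fun h => ⟨by simpa [hxy.symm] using h x, by simpa [hxy] using h y⟩, ?_⟩
  rintro ⟨hx, hy⟩ z
  by_cases hzx : x = z <;> by_cases hzy : y = z <;> simp_all

namespace Nat.Partition

variable {n : ℕ}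

lemma sum_le_of_le_parts (l : n.Partition) {m : Multiset ℕ} (h : m ≤ l.parts) : m.sum ≤ n := by
  obtain ⟨u, hu⟩ := Multiset.le_iff_exists_add.mp h
  have := l.parts_sum
  rw [hu, Multiset.sum_add] at this
  omega

lemma count_mul_le (l : n.Partition) (p : ℕ) : l.parts.count p * p ≤ n := by
  simpa using l.sum_le_of_le_parts (Multiset.le_count_iff_replicate_le.mp le_rfl)

def removeParts (l : n.Partition) (m : Multiset ℕ) (h : m ≤ l.parts) :
    (n - m.sum).Partition where
  parts := l.parts - m
  parts_pos hp := l.parts_pos (Multiset.mem_of_le tsub_le_self hp)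
  parts_sum := by
    have := congrArg Multiset.sum (tsub_add_cancel_of_le h)
    rw [Multiset.sum_add, l.parts_sum] at this
    omega

def addParts (m : Multiset ℕ) (hpos : ∀ p ∈ m, 0 < p) (hs : m.sum ≤ n)
    (l : (n - m.sum).Partition) : n.Partition where
  parts := l.parts + m
  parts_pos hp := (Multiset.mem_add.mp hp).elim l.parts_pos (hpos _)
  parts_sum := by rw [Multiset.sum_add, l.parts_sum]; omega

end Nat.Partition

lemma card_filter_le_parts_binaryPartitions {n : ℕ} {m : Multiset ℕ}
    (hm : ∀ p ∈ m, ∃ i : ℕ, p = 2 ^ i) (hs : m.sum ≤ n) :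
    #{l ∈ binaryPartitions n | m ≤ l.parts} = #(binaryPartitions (n - m.sum)) := by
  have hpos : ∀ p ∈ m, 0 < p := fun p hp => by obtain ⟨i, rfl⟩ := hm p hp; positivity
  refine card_bij' (fun l hl => l.removeParts m (mem_filter.mp hl).2)
    (fun l _ => Nat.Partition.addParts m hpos hs l) ?_ ?_ ?_ ?_
  · intro l hl
    simp only [mem_filter, mem_binaryPartitions] at hl ⊢
    exact fun p hp => hl.1 p (Multiset.mem_of_le tsub_le_self hp)
  · intro l hl
    simp only [mem_filter, mem_binaryPartitions] at hl ⊢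
    refine ⟨fun p hp => (Multiset.mem_add.mp hp).elim (hl p) (hm p), Multiset.le_add_left _ _⟩
  · intro l hl
    exact Nat.Partition.ext (tsub_add_cancel_of_le (mem_filter.mp hl).2)
  · intro l _
    exact Nat.Partition.ext (add_tsub_cancel_right l.parts m)

lemma sum_binaryPartitions_sum_filter_le_parts {ι : Type*} (n : ℕ) (I : Finset ι)
    (f : ι → Multiset ℕ) (w : ι → ℕ)
    (hf : ∀ i ∈ I, (∀ p ∈ f i, ∃ k : ℕ, p = 2 ^ k) ∧ (f i).sum ≤ n) :
    ∑ l ∈ binaryPartitions n, ∑ i ∈ I with f i ≤ l.parts, w i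
      = ∑ i ∈ I, w i * #(binaryPartitions (n - (f i).sum)) := by
  simp_rw [sum_filter]
  rw [sum_comm]
  refine sum_congr rfl fun i hi => ?_
  rw [← card_filter_le_parts_binaryPartitions (hf i hi).1 (hf i hi).2, ← sum_filter, sum_const,
    smul_eq_mul, mul_comm]

lemma sum_Icc_two_sub_one (m : ℕ) : ∑ j ∈ Icc 2 m, (j - 1) = m.choose 2 := by
  induction m with
  | zero => rfl
  | succ k ih =>
    rcases k.eq_zero_or_pos with rfl | hk
    · rfl
    · rw [sum_Icc_succ_top (by omega), ih, Nat.add_sub_cancel, Nat.choose_succ_succ' k 1,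
        Nat.choose_one_right]
      exact Nat.add_comm _ _

lemma sum_choose_count_two (n : ℕ) :
    ∑ l ∈ binaryPartitions n, (l.parts.count 2).choose 2
      = ∑ j ∈ Icc 2 (n / 2), (j - 1) * #(binaryPartitions (n - 2 * j)) := by
  have count_choose (l : n.Partition) : (l.parts.count 2).choose 2
      = ∑ j ∈ Icc 2 (n / 2) with Multiset.replicate j 2 ≤ l.parts, (j - 1) := by
    have hle := l.count_mul_le 2
    have : {j ∈ Icc 2 (n / 2) | Multiset.replicate j 2 ≤ l.parts} = Icc 2 (l.parts.count 2) := by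
      ext j
      simp only [mem_filter, mem_Icc, ← Multiset.le_count_iff_replicate_le]
      omega
    rw [this, sum_Icc_two_sub_one]
  simp_rw [count_choose]
  rw [sum_binaryPartitions_sum_filter_le_parts]
  · refine sum_congr rfl fun j _ => ?_
    rw [Multiset.sum_replicate, smul_eq_mul, mul_comm j 2]
  · intro j hj
    simp only [mem_Icc] at hj
    refine ⟨fun p hp => ⟨1, Multiset.eq_of_mem_replicate hp⟩, ?_⟩
    simp only [Multiset.sum_replicate, smul_eq_mul]
    omega

lemma sum_filter_add_four_mul_le (n : ℕ) (g : ℕ → ℕ) :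
    ∑ p ∈ Icc 1 n ×ˢ Icc 1 n with p.1 + 4 * p.2 ≤ n, g (p.1 + 4 * p.2)
      = ∑ i ∈ Icc 4 n, (i - 4 + 3) / 4 * g i := by
  rw [← sum_fiberwise_of_maps_to (t := Icc 4 n) (g := fun p => p.1 + 4 * p.2)]
  · refine sum_congr rfl fun i hi => ?_
    rw [mem_Icc] at hi
    rw [sum_congr rfl fun p hp => congrArg g (mem_filter.mp hp).2, sum_const, smul_eq_mul]
    congr 1
    rw [show (i - 4 + 3) / 4 = #(Icc 1 ((i - 4 + 3) / 4)) by simp]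
    refine card_nbij' Prod.snd (fun b => (i - 4 * b, b)) ?_ ?_ ?_ ?_ <;> intro p hp <;>
      simp only [coe_filter, coe_Icc, mem_filter, mem_product, mem_Icc, Set.mem_ofPred_eq,
        Set.mem_Icc, Prod.ext_iff, and_true] at hp ⊢ <;> omega
  · intro p hp
    simp only [mem_filter, mem_product, mem_Icc] at hp ⊢
    omega

lemma sum_count_one_mul_count_four (n : ℕ) :
    ∑ l ∈ binaryPartitions n, l.parts.count 1 * l.parts.count 4
      = ∑ i ∈ Icc 4 n, (i - 4 + 3) / 4 * #(binaryPartitions (n - i)) := by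
  set I := {p ∈ Icc 1 n ×ˢ Icc 1 n | p.1 + 4 * p.2 ≤ n}
  let f (p : ℕ × ℕ) := Multiset.replicate p.1 1 + Multiset.replicate p.2 4
  have hf_le {l : n.Partition} {p : ℕ × ℕ} :
      f p ≤ l.parts ↔ p.1 ≤ l.parts.count 1 ∧ p.2 ≤ l.parts.count 4 :=
    Multiset.replicate_add_replicate_le_iff (by norm_num)
  have hf_sum (p : ℕ × ℕ) : (f p).sum = p.1 + 4 * p.2 := by
    simp [f, Multiset.sum_replicate, mul_comm]
  have count_mul (l : n.Partition) : l.parts.count 1 * l.parts.count 4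
      = ∑ p ∈ I with f p ≤ l.parts, 1 := by
    have hle := l.sum_le_of_le_parts
      ((hf_le (p := (l.parts.count 1, l.parts.count 4))).mpr ⟨le_rfl, le_rfl⟩)
    rw [hf_sum] at hle
    have : {p ∈ I | f p ≤ l.parts} = Icc 1 (l.parts.count 1) ×ˢ Icc 1 (l.parts.count 4) := by
      ext p
      simp only [I, mem_filter, mem_product, mem_Icc, hf_le]
      omega
    simp [this]
  simp_rw [count_mul]
  rw [sum_binaryPartitions_sum_filter_le_parts, ← sum_filter_add_four_mul_le]
  · exact sum_congr rfl fun p _ => by rw [one_mul, hf_sum]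
  · intro p hp
    refine ⟨fun q hq => ?_, by rw [hf_sum]; exact (mem_filter.mp hp).2⟩
    rcases Multiset.mem_add.mp hq with hq | hq
    · exact ⟨0, Multiset.eq_of_mem_replicate hq⟩
    · exact ⟨2, Multiset.eq_of_mem_replicate hq⟩

theorem stmt_12 (n : ℕ) :
    c n = (∑ i ∈ Finset.Icc 2 (n / 2), (i - 1) * (binaryPartitions (n - 2 * i)).card)
        + (∑ i ∈ Finset.Icc 4 n, ((i - 4 + 3) / 4) * (binaryPartitions (n - i)).card) := by
  rw [c, sum_add_distrib, sum_count_one_mul_count_four, sum_choose_count_two, add_comm]
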